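/- Fix integers n ≥ 4 and 1 ≤ k ≤ n−1. If E : ℤ² × {0,1} → ℝ satisfies the pentagram square relation, is (n,k)-periodic, and every label E(q,ε) lies in the open interval (0,1), then Z(p) ∈ (0,1) for every p ∈ ℤ², and Z(p) ≤ E(q,ε) for every p, q ∈ ℤ² and ε ∈ {0,1}; that is, the invariant Z is a lower bound for all the edge labels. -/

import Mathlib

/-!
Iterating the square relation along a horizontal (resp. vertical) strip lets a vertical
(resp. horizontal) label slide across a straight run of labels. Sliding the first label of
the path defining `Z(p)` to its end and applying periodicity gives
`Z(p + (1,0)) = Z(p) = Z(p + (0,1))`, so `Z` is constant. Every label `E(q,ε)` is a factor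
of `Z(p)` for a suitable `p`, and all other factors lie in `(0,1)`.
-/

/-- The pentagram square relation for an edge labeling `E`. -/
def PentagramRel (E : ℤ × ℤ → Fin 2 → ℝ) : Prop :=
  ∀ p : ℤ × ℤ, E p 0 * E (p + (1, 0)) 1 = E p 1 * E (p + (0, 1)) 0

/-- `(n,k)`-periodicity of a labeling: invariance under translation by `(n+k, n)`. -/
def PeriodicNK (n k : ℕ) (E : ℤ × ℤ → Fin 2 → ℝ) : Prop :=
  ∀ (p : ℤ × ℤ) (ε : Fin 2), E (p + ((n : ℤ) + (k : ℤ), (n : ℤ))) ε = E p ε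

/-- The monomial `Z(p)`: the product of the labels along the monotone lattice path
from `p` to `p + (n+k, n)` consisting of all `+(1,0)` steps followed by all
`+(0,1)` steps. -/
def Zinv (n k : ℕ) (E : ℤ × ℤ → Fin 2 → ℝ) (p : ℤ × ℤ) : ℝ :=
  (∏ i ∈ Finset.range (n + k), E (p + ((i : ℤ), 0)) 0) *
    (∏ j ∈ Finset.range n, E (p + ((n : ℤ) + (k : ℤ), (j : ℤ))) 1)

open Finset

def hProd (E : ℤ × ℤ → Fin 2 → ℝ) (m : ℕ) (p : ℤ × ℤ) : ℝ :=
  ∏ i ∈ range m, E (p + ((i : ℤ), 0)) 0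

def vProd (E : ℤ × ℤ → Fin 2 → ℝ) (m : ℕ) (p : ℤ × ℤ) : ℝ :=
  ∏ j ∈ range m, E (p + (0, (j : ℤ))) 1

section Runs

variable {E : ℤ × ℤ → Fin 2 → ℝ}

theorem hProd_succ (m : ℕ) (p : ℤ × ℤ) :
    hProd E (m + 1) p = hProd E m p * E (p + ((m : ℤ), 0)) 0 :=
  prod_range_succ _ _

theorem vProd_succ (m : ℕ) (p : ℤ × ℤ) :
    vProd E (m + 1) p = vProd E m p * E (p + (0, (m : ℤ))) 1 :=
  prod_range_succ _ _

theorem hProd_succ' (m : ℕ) (p : ℤ × ℤ) :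
    hProd E (m + 1) p = E p 0 * hProd E m (p + (1, 0)) := by
  rw [hProd, prod_range_succ', mul_comm, hProd]
  congr 1
  · simp [Prod.mk_zero_zero]
  · refine prod_congr rfl fun i _ => ?_
    congr 1
    ext <;> simp; ring

theorem vProd_succ' (m : ℕ) (p : ℤ × ℤ) :
    vProd E (m + 1) p = E p 1 * vProd E m (p + (0, 1)) := by
  rw [vProd, prod_range_succ', mul_comm, vProd]
  congr 1
  · simp [Prod.mk_zero_zero]
  · refine prod_congr rfl fun j _ => ?_
    congr 1
    ext <;> simp; ring

theorem PentagramRel.mul_hProd_add_up (hE : PentagramRel E) (m : ℕ) (p : ℤ × ℤ) :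
    E p 1 * hProd E m (p + (0, 1)) = hProd E m p * E (p + ((m : ℤ), 0)) 1 := by
  induction m with
  | zero => simp [hProd, Prod.mk_zero_zero]
  | succ m ih =>
    have hcorner : p + ((m : ℤ), 0) + (1, 0) = p + (((m + 1 : ℕ) : ℤ), 0) := by
      ext <;> simp [add_assoc]
    calc E p 1 * hProd E (m + 1) (p + (0, 1))
        = (E p 1 * hProd E m (p + (0, 1))) * E (p + ((m : ℤ), 0) + (0, 1)) 0 := by
          rw [hProd_succ, add_right_comm]; ring
      _ = hProd E m p * (E (p + ((m : ℤ), 0)) 0 * E (p + ((m : ℤ), 0) + (1, 0)) 1) := by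
          rw [ih, hE]; ring
      _ = hProd E (m + 1) p * E (p + (((m + 1 : ℕ) : ℤ), 0)) 1 := by
          rw [hProd_succ, hcorner]; ring

theorem PentagramRel.vProd_mul_add_right (hE : PentagramRel E) (m : ℕ) (p : ℤ × ℤ) :
    vProd E m p * E (p + (0, (m : ℤ))) 0 = E p 0 * vProd E m (p + (1, 0)) := by
  induction m with
  | zero => simp [vProd, Prod.mk_zero_zero]
  | succ m ih =>
    have hcorner : p + (0, (m : ℤ)) + (0, 1) = p + (0, ((m + 1 : ℕ) : ℤ)) := by
      ext <;> simp [add_assoc]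
    calc vProd E (m + 1) p * E (p + (0, ((m + 1 : ℕ) : ℤ))) 0
        = vProd E m p * (E (p + (0, (m : ℤ))) 1 * E (p + (0, (m : ℤ)) + (0, 1)) 0) := by
          rw [vProd_succ, hcorner]; ring
      _ = (vProd E m p * E (p + (0, (m : ℤ))) 0) * E (p + (0, (m : ℤ)) + (1, 0)) 1 := by
          rw [← hE]; ring
      _ = E p 0 * vProd E (m + 1) (p + (1, 0)) := by
          rw [ih, vProd_succ, add_right_comm]; ring

theorem hProd_le_one (h0 : ∀ q ε, 0 ≤ E q ε) (h1 : ∀ q ε, E q ε ≤ 1) (m : ℕ) (p : ℤ × ℤ) :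
    hProd E m p ≤ 1 :=
  prod_le_one (fun _ _ => h0 _ _) fun _ _ => h1 _ _

theorem vProd_nonneg (h0 : ∀ q ε, 0 ≤ E q ε) (m : ℕ) (p : ℤ × ℤ) : 0 ≤ vProd E m p :=
  prod_nonneg fun _ _ => h0 _ _

theorem vProd_le_one (h0 : ∀ q ε, 0 ≤ E q ε) (h1 : ∀ q ε, E q ε ≤ 1) (m : ℕ) (p : ℤ × ℤ) :
    vProd E m p ≤ 1 :=
  prod_le_one (fun _ _ => h0 _ _) fun _ _ => h1 _ _

end Runs

theorem eq_of_forall_add_unit_eq {α : Type*} (f : ℤ × ℤ → α)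
    (hx : ∀ p, f (p + (1, 0)) = f p) (hy : ∀ p, f (p + (0, 1)) = f p) (p q : ℤ × ℤ) :
    f p = f q := by
  suffices h : ∀ a b : ℤ, f (a, b) = f (0, 0) from (h p.1 p.2).trans (h q.1 q.2).symm
  intro a b
  have hrow : Function.Periodic (fun x => f (x, b)) 1 := fun x => by simpa using hx (x, b)
  have hcol : Function.Periodic (fun y => f (0, y)) 1 := fun y => by simpa using hy (0, y)
  calc f (a, b) = f (0, b) := by simpa using hrow.int_mul a 0
    _ = f (0, 0) := by simpa using hcol.int_mul b 0

section Zinv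

variable {n k : ℕ} {E : ℤ × ℤ → Fin 2 → ℝ}

theorem Zinv_eq_hProd_mul_vProd (p : ℤ × ℤ) :
    Zinv n k E p = hProd E (n + k) p * vProd E n (p + ((n : ℤ) + k, 0)) := by
  rw [Zinv, hProd, vProd]
  congr 1
  refine prod_congr rfl fun j _ => ?_
  congr 1
  ext <;> simp

theorem Zinv_pos (hpos : ∀ q ε, 0 < E q ε) (p : ℤ × ℤ) : 0 < Zinv n k E p :=
  mul_pos (prod_pos fun _ _ => hpos _ _) (prod_pos fun _ _ => hpos _ _)

theorem PentagramRel.Zinv_add_right (hE : PentagramRel E) (hper : PeriodicNK n k E)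
    (hne : ∀ q ε, E q ε ≠ 0) (p : ℤ × ℤ) : Zinv n k E (p + (1, 0)) = Zinv n k E p := by
  refine mul_left_cancel₀ (hne p 0) ?_
  set r : ℤ × ℤ := p + ((n : ℤ) + k, 0) with hr
  have hlast : p + (((n + k : ℕ) : ℤ), 0) = r := by simp [hr]
  have hend : r + (0, (n : ℤ)) = p + ((n : ℤ) + k, (n : ℤ)) := by ext <;> simp [hr]
  calc E p 0 * Zinv n k E (p + (1, 0))
      = E p 0 * hProd E (n + k) (p + (1, 0)) * vProd E n (r + (1, 0)) := by
        rw [Zinv_eq_hProd_mul_vProd, hr, add_right_comm]; ring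
    _ = hProd E (n + k) p * (E r 0 * vProd E n (r + (1, 0))) := by
        rw [← hProd_succ', hProd_succ, hlast]; ring
    _ = hProd E (n + k) p * vProd E n r * E (r + (0, (n : ℤ))) 0 := by
        rw [← hE.vProd_mul_add_right]; ring
    _ = E p 0 * Zinv n k E p := by
        rw [hend, hper, Zinv_eq_hProd_mul_vProd]; ring

theorem PentagramRel.Zinv_add_up (hE : PentagramRel E) (hper : PeriodicNK n k E)
    (hne : ∀ q ε, E q ε ≠ 0) (p : ℤ × ℤ) : Zinv n k E (p + (0, 1)) = Zinv n k E p := by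
  refine mul_left_cancel₀ (hne p 1) ?_
  set r : ℤ × ℤ := p + ((n : ℤ) + k, 0) with hr
  have hlast : p + (((n + k : ℕ) : ℤ), 0) = r := by simp [hr]
  have hend : r + (0, (n : ℤ)) = p + ((n : ℤ) + k, (n : ℤ)) := by ext <;> simp [hr]
  calc E p 1 * Zinv n k E (p + (0, 1))
      = E p 1 * hProd E (n + k) (p + (0, 1)) * vProd E n (r + (0, 1)) := by
        rw [Zinv_eq_hProd_mul_vProd, hr, add_right_comm]; ring
    _ = hProd E (n + k) p * vProd E (n + 1) r := by
        rw [hE.mul_hProd_add_up, hlast, vProd_succ']; ring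
    _ = E p 1 * Zinv n k E p := by
        rw [vProd_succ, hend, hper, Zinv_eq_hProd_mul_vProd]; ring

theorem Zinv_le_label_zero (h0 : ∀ q ε, 0 ≤ E q ε) (h1 : ∀ q ε, E q ε ≤ 1) (hnk : n + k ≠ 0)
    (q : ℤ × ℤ) : Zinv n k E q ≤ E q 0 := by
  obtain ⟨m, hm⟩ := Nat.exists_eq_add_one_of_ne_zero hnk
  rw [Zinv_eq_hProd_mul_vProd, hm, hProd_succ', mul_assoc]
  exact mul_le_of_le_one_right (h0 q 0)
    (mul_le_one₀ (hProd_le_one h0 h1 _ _) (vProd_nonneg h0 _ _) (vProd_le_one h0 h1 _ _))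

theorem Zinv_le_label_one (h0 : ∀ q ε, 0 ≤ E q ε) (h1 : ∀ q ε, E q ε ≤ 1) (hn : n ≠ 0)
    (q : ℤ × ℤ) : Zinv n k E (q - ((n : ℤ) + k, 0)) ≤ E q 1 := by
  obtain ⟨m, hm⟩ := Nat.exists_eq_add_one_of_ne_zero hn
  rw [Zinv_eq_hProd_mul_vProd, sub_add_cancel, hm, vProd_succ', mul_left_comm]
  exact mul_le_of_le_one_right (h0 q 1)
    (mul_le_one₀ (hProd_le_one h0 h1 _ _) (vProd_nonneg h0 _ _) (vProd_le_one h0 h1 _ _))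

end Zinv

theorem Zinv_mem_Ioo_and_le_general (n k : ℕ) (hn : 4 ≤ n)
    (E : ℤ × ℤ → Fin 2 → ℝ) (hE : PentagramRel E) (hper : PeriodicNK n k E)
    (h01 : ∀ (q : ℤ × ℤ) (ε : Fin 2), E q ε ∈ Set.Ioo (0 : ℝ) 1) :
    (∀ p : ℤ × ℤ, Zinv n k E p ∈ Set.Ioo (0 : ℝ) 1) ∧
      (∀ (p q : ℤ × ℤ) (ε : Fin 2), Zinv n k E p ≤ E q ε) := by
  have hpos : ∀ q ε, 0 < E q ε := fun q ε => (h01 q ε).1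
  have h0 : ∀ q ε, 0 ≤ E q ε := fun q ε => (hpos q ε).le
  have h1 : ∀ q ε, E q ε ≤ 1 := fun q ε => (h01 q ε).2.le
  have hne : ∀ q ε, E q ε ≠ 0 := fun q ε => (hpos q ε).ne'
  have hconst : ∀ p q, Zinv n k E p = Zinv n k E q :=
    eq_of_forall_add_unit_eq _ (hE.Zinv_add_right hper hne) (hE.Zinv_add_up hper hne)
  have hle : ∀ p q ε, Zinv n k E p ≤ E q ε := by
    intro p q ε
    fin_cases ε
    · exact (hconst p q).trans_le (Zinv_le_label_zero h0 h1 (by omega) q)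
    · exact (hconst p _).trans_le (Zinv_le_label_one h0 h1 (by omega) q)
  exact ⟨fun p => ⟨Zinv_pos hpos p, (hle p p 0).trans_lt (h01 p 0).2⟩, hle⟩

/-- The invariant `Z` lies in `(0,1)` and serves as a lower bound for all edge labels. -/
theorem Zinv_mem_Ioo_and_le (n k : ℕ) (hn : 4 ≤ n) (hk1 : 1 ≤ k) (hkn : k ≤ n - 1)
    (E : ℤ × ℤ → Fin 2 → ℝ) (hE : PentagramRel E) (hper : PeriodicNK n k E)
    (h01 : ∀ (q : ℤ × ℤ) (ε : Fin 2), E q ε ∈ Set.Ioo (0 : ℝ) 1) :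
    (∀ p : ℤ × ℤ, Zinv n k E p ∈ Set.Ioo (0 : ℝ) 1) ∧
      (∀ (p q : ℤ × ℤ) (ε : Fin 2), Zinv n k E p ≤ E q ε) :=
  Zinv_mem_Ioo_and_le_general n k hn E hE hper h01
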